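/- arXiv:1510.03261 — 2 statements merged into one kernel-verified Lean document; each statement's English description precedes it below -/
import Mathlib

section
/- Let A be a unital graded associative algebra and D a homogeneous linear operator on A. If D is a differential operator of noncommutative order at most l for some l ≥ 2 (i.e., b_{l+1}^D = 0 identically), then D is a differential operator of noncommutative order at most 2, i.e., b_3^D = 0 identically. -/
/-- Product of a nonempty list of elements of a ring, junk value `0` on `[]`. -/
def listProd {A : Type*} [Ring A] : List A → A
  | [] => 0
  | a :: t => t.foldl (· * ·) a

/-- The Börjeson product `b_n^D(a₁, mid, aₙ)` (with `n = mid.length + 2 ≥ 2`), where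
`ε = (−1)^{|a₁||D|}` is the Koszul sign attached to the first argument. -/
def bor {A : Type*} [Ring A] (D : A → A) (ε : ℤˣ) (a1 : A) (mid : List A) (an : A) : A :=
  D (listProd (a1 :: (mid ++ [an]))) - D (listProd (a1 :: mid)) * an
    - (ε : ℤ) • (a1 * D (listProd (mid ++ [an])))
    + (ε : ℤ) • (a1 * D (listProd mid) * an)

/-! As long as there is at least one inner argument, `b_n^D` depends on its inner
arguments only through their product. Filling the `l - 2` extra slots of `b_{l+1}^D` with `1`
therefore turns it into `b_3^D`. -/

lemma listProd_cons {A : Type*} [Ring A] (a : A) (t : List A) :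
    listProd (a :: t) = a * t.prod := by
  induction t generalizing a with
  | nil => simp [listProd]
  | cons b t ih => simpa [listProd, mul_assoc] using ih (a * b)

lemma bor_cons {A : Type*} [Ring A] (D : A → A) (ε : ℤˣ) (a1 a2 : A) (rest : List A) (an : A) :
    bor D ε a1 (a2 :: rest) an = bor D ε a1 [a2 * rest.prod] an := by
  simp only [bor, List.cons_append, listProd_cons, List.prod_cons, List.prod_append,
    List.prod_nil, mul_one, one_mul, mul_assoc]

theorem stmt9_general {A : Type*} [Ring A] (D : A →+ A) (deg : A → ℤ) (dD : ℤ)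
    (homog : A → Prop) (h1 : homog 1)
    (l : ℕ)
    (hord : ∀ (a1 a2 : A) (rest : List A) (an : A), rest.length = l - 2 →
      homog a1 → homog a2 → (∀ x ∈ rest, homog x) → homog an →
      bor (⇑D) ((-1 : ℤˣ) ^ (dD * deg a1)) a1 (a2 :: rest) an = 0) :
    ∀ a1 a2 a3 : A, homog a1 → homog a2 → homog a3 →
      bor (⇑D) ((-1 : ℤˣ) ^ (dD * deg a1)) a1 [a2] a3 = 0 := by
  intro a1 a2 a3 ha1 ha2 ha3
  have hones : ∀ x ∈ List.replicate (l - 2) (1 : A), homog x := fun x hx =>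
    List.eq_of_mem_replicate hx ▸ h1
  have h := hord a1 a2 _ a3 List.length_replicate ha1 ha2 hones ha3
  simpa [bor_cons, List.prod_replicate] using h

/-- For a unital graded associative algebra `A` and a homogeneous operator `D` of degree
`dD`: if `D` has noncommutative order at most `l` for some `l ≥ 2` (i.e. `b_{l+1}^D = 0`
identically on homogeneous elements), then `D` has noncommutative order at most `2`,
i.e. `b_3^D = 0` identically on homogeneous elements. -/
theorem stmt9 {A : Type*} [Ring A] (D : A →+ A) (deg : A → ℤ) (dD : ℤ)
    (homog : A → Prop) (h1 : homog 1) (hdeg1 : deg 1 = 0)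
    (hmul : ∀ a b : A, homog a → homog b → homog (a * b))
    (l : ℕ) (hl : 2 ≤ l)
    (hord : ∀ (a1 a2 : A) (rest : List A) (an : A), rest.length = l - 2 →
      homog a1 → homog a2 → (∀ x ∈ rest, homog x) → homog an →
      bor (⇑D) ((-1 : ℤˣ) ^ (dD * deg a1)) a1 (a2 :: rest) an = 0) :
    ∀ a1 a2 a3 : A, homog a1 → homog a2 → homog a3 →
      bor (⇑D) ((-1 : ℤˣ) ^ (dD * deg a1)) a1 [a2] a3 = 0 :=
  stmt9_general D deg dD homog h1 l hord
end

section
/- Let f(q,z) be the formal power series in z with coefficients in polynomials in q whose coefficient of z^n q^{2k} is the Narayana number (1/(n-1))·binomial(n-1,k)·binomial(n-1,k+1) for n ≥ 2 (and f has linear term z). Then f satisfies the functional equation q² f(q,z)² − f(q,z)(1 − z + z q²) + z = 0. -/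
/-!
Put `t = q²`, so that `f` is the image under `t ↦ q²` of `F = z + ∑_{n ≥ 1} N_n(t) z^{n+1}`,
where `N_n(t) = ∑_k N(n, k+1) t^k` is the `n`-th Narayana polynomial. These polynomials satisfy
the three-term recurrence `(n+3) N_{n+2} = (2n+3)(1+t) N_{n+1} - n(1-t)² N_n`, which says that
`s = L - 2tF`, with `L = 1 - z + tz`, solves the linear differential equation `2 D s' = D' s` for
the discriminant `D = L² - 4tz` of the quadratic `t y² - L y + z`. Then `s² / D` has derivative
zero and constant term `1`, so `s² = D`, and `s² - D = 4t (t F² - L F + z)`.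
-/

open scoped Polynomial

theorem Nat.cast_add_one_choose_add_one {K : Type*} [Field K] [CharZero K] (m i : ℕ) :
    ((m + 1).choose (i + 1) : K) = (m + 1) / (i + 1) * m.choose i := by
  rw [div_mul_eq_mul_div, eq_div_iff (Nat.cast_add_one_ne_zero i)]
  exact_mod_cast (Nat.add_one_mul_choose_eq m i).symm

theorem Nat.cast_choose_succ_right {K : Type*} [Field K] [CharZero K] (m i : ℕ) :
    (m.choose (i + 1) : K) = (m - i) / (i + 1) * m.choose i := by
  rw [div_mul_eq_mul_div, eq_div_iff (Nat.cast_add_one_ne_zero i)]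
  rcases le_or_gt i m with h | h
  · rw [mul_comm _ (m.choose i : K), ← Nat.cast_sub h]
    exact_mod_cast Nat.choose_succ_right_eq m i
  · simp [Nat.choose_eq_zero_of_lt h, Nat.choose_eq_zero_of_lt (h.trans (Nat.lt_succ_self i))]

/-- The Narayana number `N(n, k + 1)`, indexed so that `k` is the exponent of `t` in `N_n(t)`. -/
def narayana (n k : ℕ) : ℚ := (n : ℚ)⁻¹ * n.choose k * n.choose (k + 1)

theorem natCast_mul_narayana (n k : ℕ) : n * narayana n k = n.choose k * n.choose (k + 1) := by
  rcases n.eq_zero_or_pos with rfl | _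
  · simp
  · unfold narayana
    field_simp

section NarayanaPoly

open Polynomial

noncomputable def narayanaPoly (n : ℕ) : ℚ[X] := ∑ k ∈ Finset.range n, C (narayana n k) * X ^ k

theorem coeff_narayanaPoly (n k : ℕ) : (narayanaPoly n).coeff k = narayana n k := by
  simp only [narayanaPoly, finsetSum_coeff, coeff_C_mul_X_pow, Finset.sum_ite_eq,
    Finset.mem_range]
  split_ifs with h
  · rfl
  · simp [narayana, Nat.choose_eq_zero_of_lt (show n < k + 1 by omega)]

theorem narayanaPoly_one : narayanaPoly 1 = 1 := by
  simp [narayanaPoly, narayana]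

theorem narayanaPoly_recurrence (n : ℕ) :
    C ((n : ℚ) + 3) * narayanaPoly (n + 2)
      = C (2 * (n : ℚ) + 3) * ((1 + X) * narayanaPoly (n + 1))
        - C (n : ℚ) * ((1 - X) ^ 2 * narayanaPoly n) := by
  have hsq (p : ℚ[X]) : (1 - X) ^ 2 * p = p - X * p - X * p + X * (X * p) := by ring
  ext k
  rw [hsq]
  -- Comparing coefficients of `t^(j+2)`, every binomial coefficient is a rational multiple of
  -- `n.choose j`, so the identity becomes one between rational functions of `n` and `j`.
  rcases k with _ | _ | j <;>
    simp only [coeff_C_mul, coeff_sub, coeff_add, add_mul, one_mul, coeff_X_mul, coeff_X_mul_zero,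
      coeff_narayanaPoly, mul_sub, mul_add, natCast_mul_narayana] <;>
    unfold narayana <;>
    simp only [Nat.cast_add_one_choose_add_one, Nat.choose_zero_right] <;>
    simp only [Nat.cast_choose_succ_right, Nat.choose_zero_right] <;>
    push_cast <;>
    field_simp <;>
    ring

end NarayanaPoly

namespace PowerSeries

variable {R : Type*} [CommRing R]

theorem coeff_X_mul_derivative (f : R⟦X⟧) (n : ℕ) : coeff n (X * d⁄dX R f) = n * coeff n f := by
  rcases n with _ | n
  · simp
  · rw [coeff_succ_X_mul, coeff_derivative]
    push_cast
    ring

theorem mul_derivative_eq_of_recurrence (a b : R) (u : R⟦X⟧) (h₁ : coeff 1 u = a * coeff 0 u)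
    (h : ∀ n : ℕ, (n + 2 : R) * coeff (n + 2) u + (2 * n + 1 : R) * a * coeff (n + 1) u
      + ((n : R) - 1) * b * coeff n u = 0) :
    (1 + C (2 * a) * X + C b * X ^ 2) * d⁄dX R u = (C a + C b * X) * u := by
  have hL : (1 + C (2 * a) * X + C b * X ^ 2) * d⁄dX R u
      = d⁄dX R u + C (2 * a) * (X * d⁄dX R u) + C b * (X * (X * d⁄dX R u)) := by ring
  have hR : (C a + C b * X) * u = C a * u + C b * (X * u) := by ring
  ext n
  rw [hL, hR]
  rcases n with _ | n
  · simp only [map_add, coeff_C_mul, coeff_zero_X_mul, coeff_derivative, h₁]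
    ring
  · simp only [map_add, coeff_C_mul, coeff_succ_X_mul, coeff_X_mul_derivative, coeff_derivative]
    push_cast
    linear_combination h n

theorem sq_eq_of_two_mul_derivative [IsAddTorsionFree R] {D s : R⟦X⟧}
    (hD : IsUnit (constantCoeff D)) (h : 2 * D * d⁄dX R s = d⁄dX R D * s)
    (h₀ : constantCoeff s ^ 2 = constantCoeff D) : s ^ 2 = D := by
  obtain ⟨U, rfl⟩ := isUnit_iff_constantCoeff.mpr hD
  have hU := U.mul_inv
  have hderiv : d⁄dX R (s ^ 2 * ↑U⁻¹) = d⁄dX R 1 := by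
    rw [Derivation.leibniz, derivative_inv, derivative_pow, derivative_one, smul_eq_mul,
      smul_eq_mul]
    linear_combination (↑U⁻¹ ^ 2 * s) * h - 2 * s * d⁄dX R s * ↑U⁻¹ * hU
  have hconst : constantCoeff (s ^ 2 * (↑U⁻¹ : R⟦X⟧)) = constantCoeff 1 := by
    rw [map_mul, map_pow, h₀, ← map_mul, hU]
  exact Units.mul_inv_eq_one.mp (derivative.ext hderiv hconst)

end PowerSeries

open PowerSeries

noncomputable def narayanaSeries : ℚ[X]⟦X⟧ :=
  X + X ^ 2 * mk fun n => narayanaPoly (n + 1)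

noncomputable def narayanaSqrtDiscr : ℚ[X]⟦X⟧ :=
  1 - X + X * C Polynomial.X - 2 * C Polynomial.X * narayanaSeries

theorem narayanaSqrtDiscr_eq :
    narayanaSqrtDiscr = 1 + C (-(1 + Polynomial.X)) * X
      - C (2 * Polynomial.X) * (X * (X * mk fun n => narayanaPoly (n + 1))) := by
  simp only [narayanaSqrtDiscr, narayanaSeries, map_mul, map_neg, map_add, map_one, map_ofNat]
  ring

theorem coeff_zero_narayanaSqrtDiscr : coeff 0 narayanaSqrtDiscr = 1 := by
  simp [narayanaSqrtDiscr_eq]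

theorem coeff_one_narayanaSqrtDiscr : coeff 1 narayanaSqrtDiscr = -(1 + Polynomial.X) := by
  simp only [narayanaSqrtDiscr_eq, map_sub, map_add, coeff_C_mul, coeff_succ_X_mul,
    coeff_zero_X_mul, coeff_one]
  simp

theorem coeff_add_two_narayanaSqrtDiscr (n : ℕ) :
    coeff (n + 2) narayanaSqrtDiscr = -(2 * Polynomial.X) * narayanaPoly (n + 1) := by
  simp only [narayanaSqrtDiscr_eq, map_sub, map_add, coeff_C_mul, coeff_succ_X_mul, coeff_one,
    coeff_X, coeff_mk]
  simp

theorem narayanaSqrtDiscr_recurrence (n : ℕ) :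
    (n + 2 : ℚ[X]) * coeff (n + 2) narayanaSqrtDiscr
      + (2 * n + 1 : ℚ[X]) * -(1 + Polynomial.X) * coeff (n + 1) narayanaSqrtDiscr
      + ((n : ℚ[X]) - 1) * (1 - Polynomial.X) ^ 2 * coeff n narayanaSqrtDiscr = 0 := by
  rcases n with _ | _ | n
  · simp only [coeff_add_two_narayanaSqrtDiscr, coeff_one_narayanaSqrtDiscr,
      coeff_zero_narayanaSqrtDiscr, zero_add, narayanaPoly_one]
    push_cast
    ring
  · have := narayanaPoly_recurrence 0
    simp only [map_add, map_mul, map_natCast, map_ofNat] at this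
    simp only [coeff_add_two_narayanaSqrtDiscr]
    push_cast
    linear_combination (-2 * Polynomial.X) * this
  · have := narayanaPoly_recurrence (n + 1)
    simp only [map_add, map_mul, map_natCast, map_ofNat] at this
    simp only [coeff_add_two_narayanaSqrtDiscr]
    push_cast at this ⊢
    linear_combination (-2 * Polynomial.X) * this

theorem narayanaSqrtDiscr_sq :
    narayanaSqrtDiscr ^ 2 = (1 - X + X * C Polynomial.X) ^ 2 - 4 * C Polynomial.X * X := by
  set a : ℚ[X] := -(1 + Polynomial.X)
  set b : ℚ[X] := (1 - Polynomial.X) ^ 2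
  have hD : (1 - X + X * C Polynomial.X) ^ 2 - 4 * C Polynomial.X * X
      = 1 + C (2 * a) * X + C b * X ^ 2 := by
    simp only [a, b, map_mul, map_neg, map_add, map_pow, map_sub, map_one, map_ofNat]
    ring
  have hderiv : d⁄dX ℚ[X] (1 + C (2 * a) * X + C b * X ^ 2) = 2 * (C a + C b * X) := by
    simp only [map_add, Derivation.leibniz, derivative_C, derivative_X, derivative_pow,
      derivative_one, smul_eq_mul]
    simp only [map_mul, map_ofNat]
    ring
  have hode := mul_derivative_eq_of_recurrence a b narayanaSqrtDiscr
    (by rw [coeff_one_narayanaSqrtDiscr, coeff_zero_narayanaSqrtDiscr, mul_one])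
    narayanaSqrtDiscr_recurrence
  rw [hD]
  apply sq_eq_of_two_mul_derivative
  · simp
  · rw [hderiv, mul_assoc, hode]
    ring
  · rw [← coeff_zero_eq_constantCoeff_apply, coeff_zero_narayanaSqrtDiscr]
    simp

theorem narayanaSeries_functional_equation :
    C Polynomial.X * narayanaSeries ^ 2 - narayanaSeries * (1 - X + X * C Polynomial.X) + X
      = 0 := by
  have h4 : (4 * C Polynomial.X : ℚ[X]⟦X⟧) ≠ 0 := by
    rw [← map_ofNat C, ← map_mul]
    exact (map_ne_zero_iff C C_injective).mpr (mul_ne_zero (by norm_num) Polynomial.X_ne_zero)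
  have hsq := narayanaSqrtDiscr_sq
  rw [narayanaSqrtDiscr] at hsq
  refine (mul_eq_zero.mp ?_).resolve_left h4
  linear_combination hsq

/-- The generating function `f(q,z) = z + Σ_{n≥2} Σ_k N(n,k) q^{2k} z^n`, whose coefficient
of `z^n q^{2k}` is the Narayana number `(1/(n-1))·C(n-1,k)·C(n-1,k+1)`, satisfies the
functional equation `q² f² − f(1 − z + z q²) + z = 0`. -/
theorem stmt13 :
    let f : PowerSeries (Polynomial ℚ) := PowerSeries.mk fun n =>
      if n = 1 then 1 else
        ∑ k ∈ Finset.range n,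
          Polynomial.C (((n : ℚ) - 1)⁻¹ * (((n - 1).choose k : ℕ) : ℚ)
              * (((n - 1).choose (k + 1) : ℕ) : ℚ)) * Polynomial.X ^ (2 * k)
    PowerSeries.C (R := Polynomial ℚ) (Polynomial.X ^ 2) * f ^ 2
        - f * (1 - PowerSeries.X
            + PowerSeries.X * PowerSeries.C (R := Polynomial ℚ) (Polynomial.X ^ 2))
        + PowerSeries.X = 0 := by
  intro f
  have hf : f = map (Polynomial.expand ℚ 2 : ℚ[X] →+* ℚ[X]) narayanaSeries := by
    ext n : 1
    rcases n with _ | _ | n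
    · simp [f, narayanaSeries]
    · simp [f, narayanaSeries, pow_two, mul_assoc]
    · simp only [f, narayanaSeries, coeff_map, map_add, coeff_mk, pow_two, mul_assoc,
        coeff_succ_X_mul]
      rw [if_neg (by omega), Finset.sum_range_succ, coeff_X, if_neg (by omega)]
      simp [narayanaPoly, narayana, pow_mul, mul_assoc]
  have := congrArg (map (Polynomial.expand ℚ 2 : ℚ[X] →+* ℚ[X])) narayanaSeries_functional_equation
  simpa [hf] using this
end
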